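/- For every q ∈ [1/7, 1/6), the 2-periodic sequence a = (a_n) given by a_{2n−1} = (1−6q)/5 and a_{2n} = (2−7q)/(2+3q) for all n ∈ ℕ satisfies a_1 < 1/3 < a_2, and the set C(a) − C(a) is a Cantorval. -/

import Mathlib

open Pointwise MeasureTheory

namespace CCS

/-- `dSeq a n` is the common length `d_n = ∏_{i=1}^n (1 - a_i)/2` of the intervals of the
`n`-th step of the construction of the central Cantor set `C(a)` (`d_0 = 1`).
The sequence `a` is indexed from `1`; the value `a 0` is irrelevant. -/
noncomputable def dSeq (a : ℕ → ℝ) (n : ℕ) : ℝ :=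
  ∏ i ∈ Finset.Icc 1 n, ((1 - a i) / 2)

/-- Left endpoint of the interval `I_t`, `t ∈ {0,1}^n` (coded as a list, the paper's
`t_j` being `t.getD (j-1) 0`): `l(I_t) = ∑_{j=1}^n t_j (d_{j-1} - d_j)`. -/
noncomputable def Il (a : ℕ → ℝ) (t : List ℕ) : ℝ :=
  ∑ j ∈ Finset.range t.length, (t.getD j 0 : ℝ) * (dSeq a j - dSeq a (j + 1))

/-- The `n`-th step `C_n(a)` of the construction of the central Cantor set:
the union of the intervals `I_t = [l(I_t), l(I_t) + d_n]` over `t ∈ {0,1}^n`. -/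
noncomputable def cantorStep (a : ℕ → ℝ) (n : ℕ) : Set ℝ :=
  ⋃ t ∈ {t : List ℕ | t.length = n ∧ ∀ j ∈ t, j ≤ 1},
    Set.Icc (Il a t) (Il a t + dSeq a n)

/-- The central Cantor set `C(a) = ⋂ₙ C_n(a)`. -/
noncomputable def cantorSet (a : ℕ → ℝ) : Set ℝ := ⋂ n, cantorStep a n

/-- Left endpoint of the interval `J_s = I_t - I_p`, for `s ∈ {0,1,2}^n`:
`l(J_s) = -1 + ∑_{j=1}^n s_j (d_{j-1} - d_j)`. -/
noncomputable def Jl (a : ℕ → ℝ) (s : List ℕ) : ℝ :=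
  -1 + ∑ j ∈ Finset.range s.length, (s.getD j 0 : ℝ) * (dSeq a j - dSeq a (j + 1))

/-- Right endpoint of `J_s`: `r(J_s) = l(J_s) + 2 d_n`. -/
noncomputable def Jr (a : ℕ → ℝ) (s : List ℕ) : ℝ :=
  Jl a s + 2 * dSeq a s.length

/-- The interval `J_s`. -/
noncomputable def Jset (a : ℕ → ℝ) (s : List ℕ) : Set ℝ := Set.Icc (Jl a s) (Jr a s)

/-- Left endpoint of the gap `G^i_s` (`i = 0`: left gap, `i = 1`: right gap) of `J_s`. -/
noncomputable def Gl (a : ℕ → ℝ) (i : ℕ) (s : List ℕ) : ℝ :=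
  Jl a s + (i : ℝ) * (dSeq a s.length - dSeq a (s.length + 1)) + 2 * dSeq a (s.length + 1)

/-- Right endpoint of the gap `G^i_s`. -/
noncomputable def Gr (a : ℕ → ℝ) (i : ℕ) (s : List ℕ) : ℝ :=
  Jl a s + ((i : ℝ) + 1) * (dSeq a s.length - dSeq a (s.length + 1))

/-- The gap `G^i_s ⊆ J_s`, an open interval. -/
noncomputable def Gset (a : ℕ → ℝ) (i : ℕ) (s : List ℕ) : Set ℝ :=
  Set.Ioo (Gl a i s) (Gr a i s)

/-- `N(0,s) = max {j : s_j > 0}`, `N(1,s) = max {j : s_j < 2}` (1-based, `max ∅ = 0`). -/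
noncomputable def Nidx (i : ℕ) (s : List ℕ) : ℕ :=
  sSup {j | 1 ≤ j ∧ j ≤ s.length ∧
    (if i = 0 then 0 < s.getD (j - 1) 0 else s.getD (j - 1) 0 < 2)}

/-- The family `𝒢^{i0}_{s0}(n)` of (indices of) gaps of rank `n`, for
`s0 ∈ {0,1,2}^{k_m - 1}`; a gap `G^i_s` is coded by the pair `(i, s)`.
`𝒢^{i0}_{s0}(m) = {G^{i0}_{s0}}` and for `n > m`,
`𝒢^{i0}_{s0}(n)` consists of the gap `Ḡ^{i0}_{s0}(n)` together with the gaps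
`Ḡ^1_{t^j}(n)`, `Ḡ^0_{t^(j+1)}(n)` for all `G^j_t ∈ 𝒢^{i0}_{s0}(l)`, `m ≤ l < n`. -/
def gapFamily (k : ℕ → ℕ) (i0 : ℕ) (s0 : List ℕ) (m : ℕ) (n : ℕ) : Set (ℕ × List ℕ) :=
  if n ≤ m then {(i0, s0)}
  else
    {(i0, s0 ++ List.replicate (k n - k m) (2 * i0))} ∪
      ⋃ (l : ℕ) (_ : m ≤ l) (hl : l < n),
        ⋃ p ∈ gapFamily k i0 s0 m l,
          ({(1, p.2 ++ p.1 :: List.replicate (k n - k l - 1) 2),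
            (0, p.2 ++ (p.1 + 1) :: List.replicate (k n - k l - 1) 0)} : Set (ℕ × List ℕ))
termination_by n
decreasing_by exact hl

/-- The family `𝒢^{i0}_{s0} = ⋃_{n ≥ m} 𝒢^{i0}_{s0}(n)`. -/
def gapFamilyAll (k : ℕ → ℕ) (i0 : ℕ) (s0 : List ℕ) (m : ℕ) : Set (ℕ × List ℕ) :=
  ⋃ (n : ℕ) (_ : m ≤ n), gapFamily k i0 s0 m n

/-- The family `𝒢_t := 𝒢^0_{t ++ 0^{(k_m - |t| - 1)}} ∪ 𝒢^1_{t ++ 2^{(k_m - |t| - 1)}}`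
for `t ∈ {0,1,2}^k` with `k_{m-1} ≤ k < k_m`. -/
def gapFamilyT (k : ℕ → ℕ) (m : ℕ) (t : List ℕ) : Set (ℕ × List ℕ) :=
  gapFamilyAll k 0 (t ++ List.replicate (k m - t.length - 1) 0) m ∪
    gapFamilyAll k 1 (t ++ List.replicate (k m - t.length - 1) 2) m

/-- The union `⋃ 𝒢` of a family of (indices of) gaps, as a subset of `ℝ`. -/
noncomputable def gapUnion (a : ℕ → ℝ) (G : Set (ℕ × List ℕ)) : Set ℝ :=
  ⋃ p ∈ G, Gset a p.1 p.2

/-- `padSeq k c s m n` is the index of the gap `G^i(s,n)` (for `c = 2i`):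
`s ++ c^{(k_m - |s| - 1)} ++ 1 ++ c^{(k_{m+1} - k_m - 1)} ++ 1 ++ ⋯ ++ 1 ++ c^{(k_n - k_{n-1} - 1)}`. -/
def padSeq (k : ℕ → ℕ) (c : ℕ) (s : List ℕ) (m : ℕ) : ℕ → List ℕ
  | 0 => s ++ List.replicate (k m - s.length - 1) c
  | n + 1 =>
    if n + 1 ≤ m then s ++ List.replicate (k m - s.length - 1) c
    else padSeq k c s m n ++ 1 :: List.replicate (k (n + 1) - k n - 1) c

/-- `δ_n := min {3d_i - d_{i-1} : k_{n-1} + 1 ≤ i ≤ k_n - 1}` (as an element of `EReal`,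
so that `min ∅ = ⊤ = ∞`). -/
noncomputable def deltaMin (a : ℕ → ℝ) (k : ℕ → ℕ) (n : ℕ) : EReal :=
  sInf ((fun i => ((3 * dSeq a i - dSeq a (i - 1) : ℝ) : EReal)) ''
    (Set.Icc (k (n - 1) + 1) (k n - 1)))

/-- `Δ_n := max {3d_i - d_{i-1} : k_{n-1} + 1 ≤ i ≤ k_n - 1}` (`max ∅ = ⊥ = -∞`). -/
noncomputable def deltaMax (a : ℕ → ℝ) (k : ℕ → ℕ) (n : ℕ) : EReal :=
  sSup ((fun i => ((3 * dSeq a i - dSeq a (i - 1) : ℝ) : EReal)) ''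
    (Set.Icc (k (n - 1) + 1) (k n - 1)))

/-- `m_n := min { δ_n - (d_{k_n - 1} - d_{k_n}), 4 d_{k_n} - Δ_n }`. -/
noncomputable def mSeq (a : ℕ → ℝ) (k : ℕ → ℕ) (n : ℕ) : EReal :=
  min (deltaMin a k n - ((dSeq a (k n - 1) - dSeq a (k n) : ℝ) : EReal))
    (((4 * dSeq a (k n) : ℝ) : EReal) - deltaMax a k n)

/-- `∑_{i=n+1}^∞ (d_{k_i - 1} - d_{k_i})`. -/
noncomputable def tailSum (a : ℕ → ℝ) (k : ℕ → ℕ) (n : ℕ) : ℝ :=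
  ∑' i : ℕ, (dSeq a (k (n + 1 + i) - 1) - dSeq a (k (n + 1 + i)))

/-- Condition `(*)`: `m_n ≥ 2 ∑_{i=n+1}^∞ (d_{k_i - 1} - d_{k_i})` for every `n ∈ ℕ`. -/
def condStar (a : ℕ → ℝ) (k : ℕ → ℕ) : Prop :=
  ∀ n : ℕ, 1 ≤ n → ((2 * tailSum a k n : ℝ) : EReal) ≤ mSeq a k n

/-- `(k_n)_{n ≥ 1}` is the increasing enumeration of all indices greater than `k 0 = k₀`
at which `a` exceeds `1/3`. -/
def IsGapEnum (a : ℕ → ℝ) (k : ℕ → ℕ) : Prop :=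
  StrictMono k ∧ (∀ n, 1 ≤ n → k 0 < k n ∧ 1 / 3 < a (k n)) ∧
    (∀ j, k 0 < j → 1 / 3 < a j → ∃ n, 1 ≤ n ∧ k n = j)

/-- `G` is a gap of `E`: a bounded connected component of `ℝ ∖ E`. -/
def IsGapOf (E G : Set ℝ) : Prop :=
  (∃ x ∉ E, G = connectedComponentIn Eᶜ x) ∧ Bornology.IsBounded G

/-- `C` is a proper (nontrivial) connected component of `E`. -/
def IsProperComponentOf (E C : Set ℝ) : Prop :=
  (∃ x ∈ E, C = connectedComponentIn E x) ∧ C.Nontrivial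

/-- `E` is a Cantorval: a perfect set with infinitely many gaps such that both endpoints
of every gap are accumulated both by gaps and by proper components of `E`. -/
def IsCantorval (E : Set ℝ) : Prop :=
  Perfect E ∧ {G : Set ℝ | IsGapOf E G}.Infinite ∧
    ∀ G, IsGapOf E G → ∀ p, p = sInf G ∨ p = sSup G →
      (∀ ε > 0, ∃ G', IsGapOf E G' ∧ G' ≠ G ∧ G' ⊆ Set.Ioo (p - ε) (p + ε)) ∧
      (∀ ε > 0, ∃ C, IsProperComponentOf E C ∧ C ⊆ Set.Ioo (p - ε) (p + ε))

/-- `J_s` and `J_u` (of length `k_m - 1`) are associated: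
`N := N(0,s) = N(1,u) ∈ {k_{m-1}+1, …, k_m - 1}`, `s|(N-1) = u|(N-1)`, `u_N = s_N - 1`.
Then `J_u` is the interval covering `𝒢^0_s` and `J_s` is the interval covering `𝒢^1_u`. -/
def Associated (k : ℕ → ℕ) (m : ℕ) (s u : List ℕ) : Prop :=
  s.length = k m - 1 ∧ u.length = k m - 1 ∧
    Nidx 0 s = Nidx 1 u ∧
    k (m - 1) + 1 ≤ Nidx 0 s ∧ Nidx 0 s ≤ k m - 1 ∧
    s.take (Nidx 0 s - 1) = u.take (Nidx 0 s - 1) ∧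
    u.getD (Nidx 0 s - 1) 0 = s.getD (Nidx 0 s - 1) 0 - 1

/-- `G^i_g ⊂_* J_v`: the gap `G^i_g` is covered by the interval `J_v`, i.e. `G^i_g`
belongs to a family `𝒢^0_w` (resp. `𝒢^1_w`) such that `J_v` is the interval covering it. -/
def CoversGap (k : ℕ → ℕ) (i : ℕ) (g : List ℕ) (v : List ℕ) : Prop :=
  ∃ m w, 1 ≤ m ∧
    ((Associated k m w v ∧ (i, g) ∈ gapFamilyAll k 0 w m) ∨
      (Associated k m v w ∧ (i, g) ∈ gapFamilyAll k 1 w m))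

/-- The achievement set `E(x) = {∑_{j ∈ A} x_j : A ⊆ ℕ}` of a series (indexed from `1`). -/
def achievementSet (x : ℕ → ℝ) : Set ℝ :=
  {y | ∃ A : Set ℕ, A ⊆ {n | 1 ≤ n} ∧ HasSum (A.indicator x) y}

/-! With `r = (1 - q) / 5`, two steps of the construction give
`C(a) = ⋃_{c ∈ {0, 2, 3, 5}} (r c + q C(a))`, so `K = C(a) - C(a)` is the attractor of the
similarities `y ↦ r e + q y`, `e ∈ {0, ±1, ±2, ±3, ±5}`. As `q ≥ 1/7`, the images of
`[-3/5, 3/5]` under the digits `|e| ≤ 3` cover it, so `[-3/5, 3/5] ⊆ K`; as `q < 1/6`, the missing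
digit `4` leaves the central gap `((3 + 2q)/5, 1 - 2q)`. On `[-3/5, 1]` and on `[-1, ∞)` the
similarities for the digits `3` and `5` copy `K` onto itself, and `K = -K`; by induction on its
length, every gap is the image of the central gap under a composition of these maps. The images of
the pattern "gap, `[-3/5, 3/5]`, gap" under the powers of `y ↦ 1 - q + q y` accumulate at `1`;
transported along, they make every gap endpoint a limit of gaps and of nontrivial components. -/

open Set Filter Topology

section CentralCantorSet

lemma dSeq_zero (a : ℕ → ℝ) : dSeq a 0 = 1 := by
  simp [dSeq]

lemma dSeq_succ (a : ℕ → ℝ) (n : ℕ) : dSeq a (n + 1) = dSeq a n * ((1 - a (n + 1)) / 2) :=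
  Finset.prod_Icc_succ_top (by omega) _

lemma dSeq_succ_eq_mul_shift (a : ℕ → ℝ) (n : ℕ) :
    dSeq a (n + 1) = dSeq a 1 * dSeq (fun i => a (i + 1)) n := by
  induction n with
  | zero => simp [dSeq_zero]
  | succ n ih => rw [dSeq_succ a (n + 1), ih, dSeq_succ _ n, mul_assoc]

lemma Il_cons (a : ℕ → ℝ) (b : ℕ) (t : List ℕ) :
    Il a (b :: t) = b * (1 - dSeq a 1) + dSeq a 1 * Il (fun i => a (i + 1)) t := by
  rw [Il, Il, List.length_cons, Finset.sum_range_succ', add_comm, Finset.mul_sum]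
  congr 1
  refine Finset.sum_congr rfl fun j _ => ?_
  rw [List.getD_cons_succ, dSeq_succ_eq_mul_shift a j, dSeq_succ_eq_mul_shift a (j + 1)]
  ring

variable {a : ℕ → ℝ}

lemma dSeq_one (a : ℕ → ℝ) : dSeq a 1 = (1 - a 1) / 2 := by
  rw [dSeq_succ, dSeq_zero, one_mul]

lemma cantorStep_zero (a : ℕ → ℝ) : cantorStep a 0 = Icc 0 1 := by
  ext x
  simp [cantorStep, Il, dSeq_zero]

lemma mem_cantorStep_succ (h1 : a 1 < 1) {n : ℕ} {x : ℝ} :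
    x ∈ cantorStep a (n + 1) ↔ ∃ c ∈ ({0, 1 - dSeq a 1} : Set ℝ),
      ∃ y ∈ cantorStep (fun i => a (i + 1)) n, c + dSeq a 1 * y = x := by
  have hd : 0 < dSeq a 1 := by rw [dSeq_one]; linarith
  simp only [cantorStep, mem_iUnion, mem_ofPred_eq, exists_prop, mem_Icc,
    dSeq_succ_eq_mul_shift a n]
  constructor
  · rintro ⟨_ | ⟨b, t⟩, ⟨hlen, hval⟩, hx⟩
    · simp at hlen
    rw [Il_cons] at hx
    have hb : b ≤ 1 := hval b (by simp)
    refine ⟨b * (1 - dSeq a 1), ?_, (x - b * (1 - dSeq a 1)) / dSeq a 1,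
      ⟨t, ⟨by simpa using hlen, fun j hj => hval j (by simp [hj])⟩, ?_⟩, by field_simp; ring⟩
    · interval_cases b <;> simp
    · rw [le_div_iff₀ hd, div_le_iff₀ hd]
      constructor <;> nlinarith
  · rintro ⟨c, hc, y, ⟨t, ⟨hlen, hval⟩, hy⟩, rfl⟩
    obtain ⟨b, hb, rfl⟩ : ∃ b : ℕ, b ≤ 1 ∧ b * (1 - dSeq a 1) = c := by
      rcases hc with rfl | rfl
      exacts [⟨0, by simp⟩, ⟨1, by simp⟩]
    refine ⟨b :: t, ⟨by simpa using hlen, ?_⟩, ?_⟩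
    · simpa [hb] using hval
    · rw [Il_cons]
      constructor <;> nlinarith

lemma cantorStep_eq_biUnion (h1 : a 1 < 1) (n : ℕ) :
    cantorStep a (n + 1) = ⋃ c ∈ ({0, 1 - dSeq a 1} : Set ℝ),
      (fun y => c + dSeq a 1 * y) '' cantorStep (fun i => a (i + 1)) n := by
  ext x
  simp only [mem_cantorStep_succ h1, mem_iUnion, mem_image, exists_prop]

lemma cantorStep_subset_Icc (ha : ∀ n, a (n + 1) ∈ Ioo 0 1) (n : ℕ) :
    cantorStep a n ⊆ Icc 0 1 := by
  induction n generalizing a with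
  | zero => rw [cantorStep_zero]
  | succ n ih =>
    have hd : dSeq a 1 ∈ Ioo 0 (1 / 2) := by
      rw [dSeq_one]; constructor <;> linarith [(ha 0).1, (ha 0).2]
    rintro x hx
    obtain ⟨c, hc, y, hy, rfl⟩ := (mem_cantorStep_succ (ha 0).2).1 hx
    obtain ⟨hy0, hy1⟩ := ih (fun n => ha (n + 1)) hy
    rcases hc with rfl | rfl <;> constructor <;> nlinarith [hd.1, hd.2]

lemma isCompact_cantorStep (ha : ∀ n, a (n + 1) < 1) (n : ℕ) : IsCompact (cantorStep a n) := by
  induction n generalizing a with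
  | zero => simpa [cantorStep_zero] using isCompact_Icc
  | succ n ih =>
    rw [cantorStep_eq_biUnion (ha 0)]
    exact (toFinite _).isCompact_biUnion fun c _ =>
      (ih fun n => ha (n + 1)).image (by fun_prop)

lemma zero_mem_cantorStep (ha : ∀ n, a (n + 1) < 1) (n : ℕ) : (0 : ℝ) ∈ cantorStep a n := by
  induction n generalizing a with
  | zero => simp [cantorStep_zero]
  | succ n ih =>
    exact (mem_cantorStep_succ (ha 0)).2 ⟨0, by simp, 0, ih fun n => ha (n + 1), by simp⟩

lemma one_mem_cantorStep (ha : ∀ n, a (n + 1) < 1) (n : ℕ) : (1 : ℝ) ∈ cantorStep a n := by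
  induction n generalizing a with
  | zero => simp [cantorStep_zero]
  | succ n ih =>
    exact (mem_cantorStep_succ (ha 0)).2
      ⟨1 - dSeq a 1, by simp, 1, ih fun n => ha (n + 1), by ring⟩

lemma mem_cantorSet_iff (ha : ∀ n, a (n + 1) ∈ Ioo 0 1) {x : ℝ} :
    x ∈ cantorSet a ↔ ∃ c ∈ ({0, 1 - dSeq a 1} : Set ℝ),
      ∃ y ∈ cantorSet (fun i => a (i + 1)), c + dSeq a 1 * y = x := by
  have hd : dSeq a 1 ∈ Ioo 0 (1 / 2) := by
    rw [dSeq_one]; constructor <;> linarith [(ha 0).1, (ha 0).2]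
  have h1 := (ha 0).2
  have hsub := cantorStep_subset_Icc (a := fun i => a (i + 1)) fun n => ha (n + 1)
  simp only [cantorSet, mem_iInter]
  constructor
  · intro hx
    -- the digit is read off from which of the disjoint `[0, d₁]`, `[1 - d₁, 1]` contains `x`
    set c := if x ≤ dSeq a 1 then 0 else 1 - dSeq a 1
    refine ⟨c, by unfold c; split_ifs <;> simp, (x - c) / dSeq a 1, fun n => ?_,
      by field_simp [hd.1.ne']; ring⟩
    obtain ⟨c', hc', y, hy, rfl⟩ := (mem_cantorStep_succ h1).1 (hx (n + 1))
    obtain ⟨hy0, hy1⟩ := hsub n hy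
    have hcc : c = c' := by
      unfold c
      rcases hc' with rfl | rfl <;> split_ifs <;> first | rfl | nlinarith [hd.1, hd.2]
    rwa [hcc, add_sub_cancel_left, mul_div_cancel_left₀ _ hd.1.ne']
  · rintro ⟨c, hc, y, hy, rfl⟩
    have hmem : ∀ n, c + dSeq a 1 * y ∈ cantorStep a (n + 1) := fun n =>
      (mem_cantorStep_succ h1).2 ⟨c, hc, y, hy n, rfl⟩
    rintro (_ | n)
    · rw [cantorStep_zero]
      exact cantorStep_subset_Icc ha 1 (hmem 0)
    · exact hmem n

end CentralCantorSet

section Gaps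

variable {E : Set ℝ} {u v a b : ℝ}

def IsOpenGap (E : Set ℝ) (u v : ℝ) : Prop :=
  u < v ∧ u ∈ E ∧ v ∈ E ∧ Disjoint (Ioo u v) E

lemma IsOpenGap.isGapOf (h : IsOpenGap E u v) : IsGapOf E (Ioo u v) := by
  obtain ⟨huv, hu, hv, hdisj⟩ := h
  have hsub : Ioo u v ⊆ Eᶜ := hdisj.subset_compl_right
  have hx : (u + v) / 2 ∈ Ioo u v := ⟨by linarith, by linarith⟩
  refine ⟨⟨(u + v) / 2, hsub hx, ?_⟩, Metric.isBounded_Ioo u v⟩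
  refine (Subset.antisymm ?_ (isPreconnected_Ioo.subset_connectedComponentIn hx hsub)).symm
  intro z hz
  have hord := (isPreconnected_connectedComponentIn (F := Eᶜ) (x := (u + v) / 2)).ordConnected
  have hmid := mem_connectedComponentIn (hsub hx)
  have hout : ∀ w ∈ E, w ∉ connectedComponentIn Eᶜ ((u + v) / 2) := fun w hw hw' =>
    connectedComponentIn_subset _ _ hw' hw
  constructor
  · by_contra! hzu
    exact hout u hu (hord.out hz hmid ⟨hzu, hx.1.le⟩)
  · by_contra! hvz
    exact hout v hv (hord.out hmid hz ⟨hx.2.le, hvz⟩)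

lemma IsGapOf.nonempty {G : Set ℝ} (hG : IsGapOf E G) : G.Nonempty := by
  obtain ⟨⟨x, hx, rfl⟩, -⟩ := hG
  exact ⟨x, mem_connectedComponentIn hx⟩

lemma IsGapOf.exists_isOpenGap (hE : IsClosed E) {G : Set ℝ} (hG : IsGapOf E G) :
    ∃ u v, IsOpenGap E u v ∧ G = Ioo u v := by
  have hne := hG.nonempty
  obtain ⟨⟨x, hx, rfl⟩, hbd⟩ := hG
  set G := connectedComponentIn Eᶜ x
  have hGo : IsOpen G := hE.isOpen_compl.connectedComponentIn
  have hGE : G ⊆ Eᶜ := connectedComponentIn_subset _ _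
  have hxG : x ∈ G := mem_connectedComponentIn hx
  have hIoo : Ioo (sInf G) (sSup G) ⊆ G :=
    IsConnected.Ioo_csInf_csSup_subset ⟨hne, isPreconnected_connectedComponentIn⟩
      hbd.bddBelow hbd.bddAbove
  have hinf : sInf G ∉ G := fun h => by
    obtain ⟨l, hl, hlG⟩ := exists_Ioc_subset_of_mem_nhds (hGo.mem_nhds h) (exists_lt _)
    have := csInf_le hbd.bddBelow (hlG ⟨by linarith, by linarith⟩ : (l + sInf G) / 2 ∈ G)
    linarith
  have hsup : sSup G ∉ G := fun h => by
    obtain ⟨r, hr, hrG⟩ := exists_Ico_subset_of_mem_nhds (hGo.mem_nhds h) (exists_gt _)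
    have := le_csSup hbd.bddAbove (hrG ⟨by linarith, by linarith⟩ : (r + sSup G) / 2 ∈ G)
    linarith
  have hGIoo : G = Ioo (sInf G) (sSup G) := by
    refine Subset.antisymm (fun z hz => ?_) hIoo
    obtain ⟨h1, h2⟩ := subset_Icc_csInf_csSup hbd.bddBelow hbd.bddAbove hz
    exact ⟨h1.lt_of_ne (ne_of_mem_of_not_mem hz hinf).symm,
      h2.lt_of_ne (ne_of_mem_of_not_mem hz hsup)⟩
  have hxI : x ∈ Ioo (sInf G) (sSup G) := hGIoo ▸ hxG
  refine ⟨sInf G, sSup G, ⟨hxI.1.trans hxI.2, ?_, ?_, ?_⟩, hGIoo⟩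
  · by_contra hu
    refine hinf (isPreconnected_Ico.subset_connectedComponentIn ⟨hxI.1.le, hxI.2⟩ ?_
      ⟨le_rfl, hxI.1.trans hxI.2⟩)
    rintro z ⟨hz1, hz2⟩
    rcases hz1.eq_or_lt with rfl | hz1
    exacts [hu, hGE (hIoo ⟨hz1, hz2⟩)]
  · by_contra hv
    refine hsup (isPreconnected_Ioc.subset_connectedComponentIn ⟨hxI.1, hxI.2.le⟩ ?_
      ⟨hxI.1.trans hxI.2, le_rfl⟩)
    rintro z ⟨hz1, hz2⟩
    rcases hz2.eq_or_lt with rfl | hz2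
    exacts [hv, hGE (hIoo ⟨hz1, hz2⟩)]
  · rw [← hGIoo]
    exact subset_compl_iff_disjoint_right.1 hGE

/-- The gaps `(u, v)` and `(u', v')` trap the component of `E` containing `[x, y]` in `(a, b)`. -/
def IslandIn (E : Set ℝ) (a b : ℝ) : Prop :=
  ∃ u v x y u' v', a < u ∧ IsOpenGap E u v ∧ v ≤ x ∧ x < y ∧ Icc x y ⊆ E ∧ y ≤ u' ∧
    IsOpenGap E u' v' ∧ v' < b

lemma IslandIn.mono {a' b' : ℝ} (h : IslandIn E a b) (ha : a' ≤ a) (hb : b ≤ b') :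
    IslandIn E a' b' := by
  obtain ⟨u, v, x, y, u', v', hau, h1, hvx, hxy, hK, hyu, h2, hvb⟩ := h
  exact ⟨u, v, x, y, u', v', by linarith, h1, hvx, hxy, hK, hyu, h2, by linarith⟩

lemma IslandIn.exists_isGapOf (h : IslandIn E a b) : ∃ G, IsGapOf E G ∧ G ⊆ Ioo a b := by
  obtain ⟨u, v, x, y, u', v', hau, h1, hvx, hxy, -, hyu, h2, hvb⟩ := h
  exact ⟨Ioo u v, h1.isGapOf, Ioo_subset_Ioo hau.le (by linarith [h2.1])⟩

lemma IslandIn.exists_isProperComponentOf (h : IslandIn E a b) :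
    ∃ C, IsProperComponentOf E C ∧ C ⊆ Ioo a b := by
  obtain ⟨u, v, x, y, u', v', hau, h1, hvx, hxy, hK, hyu, h2, hvb⟩ := h
  have hx : x ∈ E := hK ⟨le_rfl, hxy.le⟩
  have hxyC : Icc x y ⊆ connectedComponentIn E x :=
    isPreconnected_Icc.subset_connectedComponentIn ⟨le_rfl, hxy.le⟩ hK
  have hord := (isPreconnected_connectedComponentIn (F := E) (x := x)).ordConnected
  have hCE : connectedComponentIn E x ⊆ E := connectedComponentIn_subset _ _
  refine ⟨_, ⟨⟨x, hx, rfl⟩, x, hxyC ⟨le_rfl, hxy.le⟩, y, hxyC ⟨hxy.le, le_rfl⟩, hxy.ne⟩,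
    fun z hz => ⟨?_, ?_⟩⟩
  · by_contra! hza
    have hm : (u + v) / 2 ∈ Ioo u v := ⟨by linarith [h1.1], by linarith [h1.1]⟩
    exact Set.disjoint_left.1 h1.2.2.2 hm
      (hCE (hord.out hz (hxyC ⟨le_rfl, hxy.le⟩) ⟨by linarith [h1.1], by linarith [h1.1]⟩))
  · by_contra! hzb
    have hm : (u' + v') / 2 ∈ Ioo u' v' := ⟨by linarith [h2.1], by linarith [h2.1]⟩
    exact Set.disjoint_left.1 h2.2.2.2 hm
      (hCE (hord.out (hxyC ⟨hxy.le, le_rfl⟩) hz ⟨by linarith [h2.1], by linarith [h2.1]⟩))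

def IslandsAccumulateBelow (E : Set ℝ) (p : ℝ) : Prop := ∀ ε > 0, IslandIn E (p - ε) p

def IslandsAccumulateAbove (E : Set ℝ) (p : ℝ) : Prop := ∀ ε > 0, IslandIn E p (p + ε)

lemma IslandsAccumulateBelow.exists_mem_lt {p : ℝ} (h : IslandsAccumulateBelow E p) :
    ∃ z ∈ E, z < p := by
  obtain ⟨u, v, x, y, u', v', -, h1, hvx, hxy, -, hyu, h2, hvb⟩ := h 1 one_pos
  exact ⟨u, h1.2.1, by linarith [h1.1, h2.1]⟩

lemma IslandsAccumulateAbove.exists_mem_gt {p : ℝ} (h : IslandsAccumulateAbove E p) :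
    ∃ z ∈ E, p < z := by
  obtain ⟨u, v, x, y, u', v', hpu, h1, -⟩ := h 1 one_pos
  exact ⟨u, h1.2.1, hpu⟩

lemma isCantorval_of_islandsAccumulate (hE : Perfect E) (hinf : {G | IsGapOf E G}.Infinite)
    (hacc : ∀ u v, IsOpenGap E u v → IslandsAccumulateBelow E u ∧ IslandsAccumulateAbove E v) :
    IsCantorval E := by
  refine ⟨hE, hinf, fun G hG p hp => ?_⟩
  obtain ⟨u, v, huv, rfl⟩ := hG.exists_isOpenGap hE.1
  rw [csInf_Ioo huv.1, csSup_Ioo huv.1] at hp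
  obtain ⟨hbelow, habove⟩ := hacc u v huv
  have hwindow : ∀ ε > 0, ∃ a b, IslandIn E a b ∧ Ioo a b ⊆ Ioo (p - ε) (p + ε) ∧
      Disjoint (Ioo a b) (Ioo u v) := by
    intro ε hε
    rcases hp with rfl | rfl
    · exact ⟨p - ε, p, hbelow ε hε, Ioo_subset_Ioo_right (by linarith),
        Ico_disjoint_Ico_same.mono Ioo_subset_Ico_self Ioo_subset_Ico_self⟩
    · exact ⟨p, p + ε, habove ε hε, Ioo_subset_Ioo_left (by linarith),
        (Ico_disjoint_Ico_same.mono Ioo_subset_Ico_self Ioo_subset_Ico_self).symm⟩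
  refine ⟨fun ε hε => ?_, fun ε hε => ?_⟩ <;> obtain ⟨a, b, hI, hsub, hdisj⟩ := hwindow ε hε
  · obtain ⟨G', hG', hG'sub⟩ := hI.exists_isGapOf
    refine ⟨G', hG', fun h => ?_, hG'sub.trans hsub⟩
    obtain ⟨z, hz⟩ := hG'.nonempty
    exact Set.disjoint_left.1 hdisj (hG'sub hz) (h ▸ hz)
  · obtain ⟨C, hC, hCsub⟩ := hI.exists_isProperComponentOf
    exact ⟨C, hC, hCsub.trans hsub⟩

end Gaps

section AffineCopies

variable {E S : Set ℝ} {c s u v a b p : ℝ}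

def AffineCopyOn (E : Set ℝ) (c s : ℝ) (S : Set ℝ) : Prop :=
  0 < s ∧ ∀ x ∈ S, c + s * x ∈ E ↔ x ∈ E

lemma AffineCopyOn.isOpenGap_iff (h : AffineCopyOn E c s S) (hS : Icc u v ⊆ S) :
    IsOpenGap E (c + s * u) (c + s * v) ↔ IsOpenGap E u v := by
  obtain ⟨hs, hcopy⟩ := h
  have hlt : c + s * u < c + s * v ↔ u < v := by
    rw [add_lt_add_iff_left, mul_lt_mul_iff_right₀ hs]
  by_cases huv : u < v
  swap
  · exact iff_of_false (fun hg => huv (hlt.1 hg.1)) (fun hg => huv hg.1)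
  have hI : ∀ z ∈ Icc u v, c + s * z ∈ E ↔ z ∈ E := fun z hz => hcopy z (hS hz)
  have hdisj : Disjoint (Ioo (c + s * u) (c + s * v)) E ↔ Disjoint (Ioo u v) E := by
    simp only [Set.disjoint_left]
    constructor
    · intro h z hz hzE
      exact h ⟨by nlinarith [hz.1], by nlinarith [hz.2]⟩
        ((hI z (Ioo_subset_Icc_self hz)).2 hzE)
    · intro h w hw hwE
      have hz : (w - c) / s ∈ Ioo u v :=
        ⟨by rw [lt_div_iff₀ hs]; linarith [hw.1], by rw [div_lt_iff₀ hs]; linarith [hw.2]⟩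
      refine h hz ((hI _ (Ioo_subset_Icc_self hz)).1 ?_)
      rwa [mul_div_cancel₀ _ hs.ne', add_sub_cancel]
  simp only [IsOpenGap, hI u ⟨le_rfl, huv.le⟩, hI v ⟨huv.le, le_rfl⟩, hdisj, hlt]

lemma AffineCopyOn.Icc_subset {x y : ℝ} (h : AffineCopyOn E c s S) (hS : Icc x y ⊆ S)
    (hE : Icc x y ⊆ E) : Icc (c + s * x) (c + s * y) ⊆ E := by
  obtain ⟨hs, hcopy⟩ := h
  intro w hw
  have hz : (w - c) / s ∈ Icc x y :=
    ⟨by rw [le_div_iff₀ hs]; linarith [hw.1], by rw [div_le_iff₀ hs]; linarith [hw.2]⟩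
  simpa [mul_div_cancel₀ _ hs.ne'] using (hcopy _ (hS hz)).2 (hE hz)

lemma AffineCopyOn.islandIn (h : AffineCopyOn E c s S) (hS : Ioo a b ⊆ S)
    (hI : IslandIn E a b) : IslandIn E (c + s * a) (c + s * b) := by
  obtain ⟨u, v, x, y, u', v', hau, h1, hvx, hxy, hK, hyu, h2, hvb⟩ := hI
  have hs := h.1
  have hsub : Icc u v' ⊆ S := fun z hz =>
    hS ⟨by linarith [hz.1], by linarith [hz.2]⟩
  have hsub' : ∀ {z w}, u ≤ z → w ≤ v' → Icc z w ⊆ S := fun hz hw =>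
    (Icc_subset_Icc hz hw).trans hsub
  refine ⟨c + s * u, c + s * v, c + s * x, c + s * y, c + s * u', c + s * v', by nlinarith,
    (h.isOpenGap_iff (hsub' le_rfl (by linarith [h2.1]))).2 h1, by nlinarith, by nlinarith,
    h.Icc_subset (hsub' (by linarith [h1.1]) (by linarith [h2.1])) hK, by nlinarith,
    (h.isOpenGap_iff (hsub' (by linarith [h1.1]) le_rfl)).2 h2, by nlinarith⟩

lemma AffineCopyOn.islandsAccumulateBelow (h : AffineCopyOn E c s S) (hS : S ∈ 𝓝[<] p)
    (hp : IslandsAccumulateBelow E p) : IslandsAccumulateBelow E (c + s * p) := by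
  intro ε hε
  obtain ⟨l, hl, hlS⟩ := mem_nhdsLT_iff_exists_Ioo_subset.1 hS
  have hδ : 0 < min (p - l) (ε / s) := lt_min (sub_pos.2 hl) (div_pos hε h.1)
  have hδl := min_le_left (p - l) (ε / s)
  have hδε : s * min (p - l) (ε / s) ≤ ε :=
    (le_div_iff₀' h.1).1 (min_le_right (p - l) (ε / s))
  refine (h.islandIn ((Ioo_subset_Ioo_left (by linarith)).trans hlS) (hp _ hδ)).mono ?_ le_rfl
  linarith

lemma AffineCopyOn.islandsAccumulateAbove (h : AffineCopyOn E c s S) (hS : S ∈ 𝓝[>] p)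
    (hp : IslandsAccumulateAbove E p) : IslandsAccumulateAbove E (c + s * p) := by
  intro ε hε
  obtain ⟨r, hr, hrS⟩ := mem_nhdsGT_iff_exists_Ioo_subset.1 hS
  have hδ : 0 < min (r - p) (ε / s) := lt_min (sub_pos.2 hr) (div_pos hε h.1)
  have hδr := min_le_left (r - p) (ε / s)
  have hδε : s * min (r - p) (ε / s) ≤ ε :=
    (le_div_iff₀' h.1).1 (min_le_right (r - p) (ε / s))
  refine (h.islandIn ((Ioo_subset_Ioo_right (by linarith)).trans hrS) (hp _ hδ)).mono
    le_rfl ?_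
  linarith

end AffineCopies

section Symmetric

variable {E : Set ℝ} {u v a b p : ℝ}

lemma IsOpenGap.neg (hE : ∀ x ∈ E, -x ∈ E) (h : IsOpenGap E u v) : IsOpenGap E (-v) (-u) := by
  obtain ⟨huv, hu, hv, hdisj⟩ := h
  refine ⟨neg_lt_neg huv, hE v hv, hE u hu, Set.disjoint_left.2 fun z hz hzE => ?_⟩
  have hz' : -z ∈ Ioo u v := ⟨by linarith [hz.2], by linarith [hz.1]⟩
  exact Set.disjoint_left.1 hdisj hz' (hE _ hzE)

lemma IslandIn.neg (hE : ∀ x ∈ E, -x ∈ E) (h : IslandIn E a b) : IslandIn E (-b) (-a) := by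
  obtain ⟨u, v, x, y, u', v', hau, h1, hvx, hxy, hK, hyu, h2, hvb⟩ := h
  refine ⟨-v', -u', -y, -x, -v, -u, by linarith, h2.neg hE, by linarith, by linarith,
    fun z hz => ?_, by linarith, h1.neg hE, by linarith⟩
  simpa using hE _ (hK (show -z ∈ Icc x y from ⟨by linarith [hz.2], by linarith [hz.1]⟩))

lemma IslandsAccumulateBelow.neg (hE : ∀ x ∈ E, -x ∈ E) (h : IslandsAccumulateBelow E p) :
    IslandsAccumulateAbove E (-p) := fun ε hε => by
  simpa [neg_add_eq_sub] using (h ε hε).neg hE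

lemma IslandsAccumulateAbove.neg (hE : ∀ x ∈ E, -x ∈ E) (h : IslandsAccumulateAbove E p) :
    IslandsAccumulateBelow E (-p) := fun ε hε => by
  simpa [sub_eq_add_neg, add_comm] using (h ε hε).neg hE

end Symmetric

section SelfSimilar

def IsSelfSimilar {R : Type*} [CommRing R] (A D : Set R) (s : R) : Prop :=
  ∀ x, x ∈ A ↔ ∃ c ∈ D, ∃ y ∈ A, c + s * y = x

lemma IsSelfSimilar.sub_self {R : Type*} [CommRing R] {A D : Set R} {s : R}
    (h : IsSelfSimilar A D s) : IsSelfSimilar (A - A) (D - D) s := by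
  intro x
  simp only [Set.mem_sub]
  constructor
  · rintro ⟨_, hx, _, hx', rfl⟩
    obtain ⟨c, hc, y, hy, rfl⟩ := (h _).1 hx
    obtain ⟨c', hc', y', hy', rfl⟩ := (h _).1 hx'
    exact ⟨c - c', ⟨c, hc, c', hc', rfl⟩, y - y', ⟨y, hy, y', hy', rfl⟩, by ring⟩
  · rintro ⟨_, ⟨c, hc, c', hc', rfl⟩, _, ⟨y, hy, y', hy', rfl⟩, rfl⟩
    exact ⟨c + s * y, (h _).2 ⟨c, hc, y, hy, rfl⟩, c' + s * y', (h _).2 ⟨c', hc', y', hy', rfl⟩,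
      by ring⟩

lemma IsSelfSimilar.perfect {A D : Set ℝ} {s : ℝ} (h : IsSelfSimilar A D s) (hA : IsClosed A)
    (hbdd : Bornology.IsBounded A) (hnt : A.Nontrivial) (hs0 : 0 < s) (hs1 : s < 1) :
    Perfect A := by
  obtain ⟨L, hL⟩ := Metric.isBounded_iff.1 hbdd
  have hnear : ∀ n : ℕ, ∀ x ∈ A, ∃ y ∈ A, y ≠ x ∧ dist y x ≤ L * s ^ n := by
    intro n
    induction n with
    | zero =>
      intro x hx
      obtain ⟨y, hy, hyx⟩ := hnt.exists_ne x
      exact ⟨y, hy, hyx, by simpa using hL hy hx⟩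
    | succ n ih =>
      intro x hx
      obtain ⟨c, hc, x', hx', rfl⟩ := (h x).1 hx
      obtain ⟨y', hy', hne, hdist⟩ := ih x' hx'
      refine ⟨c + s * y', (h _).2 ⟨c, hc, y', hy', rfl⟩, by simpa [hs0.ne'] using hne, ?_⟩
      rw [Real.dist_eq, show c + s * y' - (c + s * x') = s * (y' - x') by ring, abs_mul,
        abs_of_pos hs0, pow_succ, ← Real.dist_eq]
      nlinarith
  refine ⟨hA, fun x hx => accPt_iff_nhds.2 fun U hU => ?_⟩
  obtain ⟨ε, hε, hball⟩ := Metric.mem_nhds_iff.1 hU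
  have hlim : Tendsto (fun n : ℕ => L * s ^ n) atTop (𝓝 0) := by
    simpa using (tendsto_pow_atTop_nhds_zero_of_lt_one hs0.le hs1).const_mul L
  obtain ⟨n, hn⟩ := (hlim.eventually (gt_mem_nhds hε)).exists
  obtain ⟨y, hy, hne, hdist⟩ := hnear n x hx
  exact ⟨y, ⟨hball (Metric.mem_ball.2 (hdist.trans_lt hn)), hy⟩, hne⟩

lemma Icc_subset_of_covered_by_images {A : Set ℝ} (hA : IsClosed A) (hne : A.Nonempty)
    {l r s : ℝ} (hs0 : 0 ≤ s) (hs1 : s < 1)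
    (hcover : ∀ x ∈ Icc l r, ∃ c, (∀ y ∈ A, c + s * y ∈ A) ∧ ∃ x' ∈ Icc l r, c + s * x' = x) :
    Icc l r ⊆ A := by
  rcases (Icc l r).eq_empty_or_nonempty with h | hI
  · simp [h]
  obtain ⟨x₀, hx₀, hmax⟩ :=
    isCompact_Icc.exists_isMaxOn hI (Metric.continuous_infDist_pt A).continuousOn
  -- the largest distance to `A` on `[l, r]` is at most `s` times itself
  have hle : Metric.infDist x₀ A ≤ s * Metric.infDist x₀ A := by
    obtain ⟨c, hcA, x', hx', rfl⟩ := hcover x₀ hx₀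
    obtain ⟨z, hz, hdz⟩ := hA.exists_infDist_eq_dist hne x'
    calc Metric.infDist (c + s * x') A ≤ dist (c + s * x') (c + s * z) :=
          Metric.infDist_le_dist_of_mem (hcA z hz)
      _ = s * Metric.infDist x' A := by
          rw [hdz, Real.dist_eq, Real.dist_eq, add_sub_add_left_eq_sub, ← mul_sub, abs_mul,
            abs_of_nonneg hs0]
      _ ≤ s * Metric.infDist (c + s * x') A := mul_le_mul_of_nonneg_left (hmax hx') hs0
  have h0 : Metric.infDist x₀ A = 0 := by nlinarith [Metric.infDist_nonneg (x := x₀) (s := A)]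
  intro x hx
  rw [hA.mem_iff_infDist_zero hne]
  exact le_antisymm (h0 ▸ hmax hx) Metric.infDist_nonneg

end SelfSimilar

lemma cantorSet_isSelfSimilar {a : ℕ → ℝ} (ha : ∀ n, a (n + 1) ∈ Ioo 0 1)
    (hper : ∀ n, a (n + 2) = a n) :
    IsSelfSimilar (cantorSet a) {0, 1 - dSeq a 1, dSeq a 1 - dSeq a 2, 1 - dSeq a 2}
      (dSeq a 2) := by
  have hshift : (fun i => a (i + 1 + 1)) = a := funext hper
  rw [dSeq_succ_eq_mul_shift a 1]
  intro x
  rw [mem_cantorSet_iff ha]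
  simp_rw [mem_cantorSet_iff (a := fun i => a (i + 1)) (fun n => ha (n + 1)), hshift]
  set d := dSeq a 1
  set d' := dSeq (fun i => a (i + 1)) 1
  constructor
  · rintro ⟨c, hc, _, ⟨c', hc', y, hy, rfl⟩, rfl⟩
    refine ⟨c + d * c', ?_, y, hy, by ring⟩
    rcases hc with rfl | rfl <;> rcases hc' with rfl | rfl
    exacts [Or.inl (by ring), Or.inr (Or.inr (Or.inl (by ring))), Or.inr (Or.inl (by ring)),
      Or.inr (Or.inr (Or.inr (mem_singleton_iff.2 (by ring))))]
  · rintro ⟨e, he, y, hy, rfl⟩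
    obtain ⟨c, hc, c', hc', rfl⟩ : ∃ c ∈ ({0, 1 - d} : Set ℝ), ∃ c' ∈ ({0, 1 - d'} : Set ℝ),
        c + d * c' = e := by
      rcases he with rfl | rfl | rfl | rfl
      exacts [⟨0, by simp, 0, by simp, by ring⟩, ⟨1 - d, by simp, 0, by simp, by ring⟩,
        ⟨0, by simp, 1 - d', by simp, by ring⟩, ⟨1 - d, by simp, 1 - d', by simp, by ring⟩]
    exact ⟨c, hc, c' + d' * y, ⟨c', hc', y, hy, rfl⟩, by ring⟩

lemma exists_abs_sub_le_of_mem_Icc {a d w x : ℝ} (hd : d ≤ 2 * w) (N : ℕ)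
    (hx : x ∈ Icc (a - w) (a + N * d + w)) : ∃ k ≤ N, |x - (a + k * d)| ≤ w := by
  induction N with
  | zero =>
    refine ⟨0, le_rfl, abs_le.2 ⟨?_, ?_⟩⟩ <;>
      simp only [mem_Icc, CharP.cast_eq_zero, zero_mul, add_zero] at hx <;> simp <;> linarith
  | succ N ih =>
    by_cases h : x ≤ a + N * d + w
    · obtain ⟨k, hk, hxk⟩ := ih ⟨hx.1, h⟩
      exact ⟨k, hk.trans N.le_succ, hxk⟩
    · refine ⟨N + 1, le_rfl, abs_le.2 ⟨?_, ?_⟩⟩ <;> push_cast at hx ⊢ <;> linarith [hx.2]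

/-- The left endpoints `r c`, `r = (1 - q) / 5`, `c ∈ {0, 3, 2, 5}`, of the intervals of `C₂(a)`. -/
def cantorDigits (q : ℝ) : Set ℝ := {0, (3 - 3 * q) / 5, (2 - 2 * q) / 5, 1 - q}

lemma cantorDigits_sub_eq_of_three_fifths_le {q e y : ℝ} (hq0 : 0 ≤ q) (hq : q < 1 / 3)
    (he : e ∈ cantorDigits q - cantorDigits q) (hy : y ∈ Icc (-1) 1) (h : 3 / 5 ≤ e + q * y) :
    e = (3 - 3 * q) / 5 ∨ e = 1 - q := by
  obtain ⟨c, hc, c', hc', rfl⟩ := he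
  simp only [cantorDigits, mem_insert_iff, mem_singleton_iff] at hc hc'
  have hqy : q * y ≤ q := by nlinarith [hy.2]
  rcases hc with rfl | rfl | rfl | rfl <;> rcases hc' with rfl | rfl | rfl | rfl <;>
    first | exact Or.inl (by ring1) | exact Or.inr (by ring1) | (exfalso; linarith)

lemma one_sub_mem_cantorDigits_sub (q : ℝ) : 1 - q ∈ cantorDigits q - cantorDigits q :=
  ⟨1 - q, by simp [cantorDigits], 0, by simp [cantorDigits], sub_zero _⟩

lemma three_sub_three_mul_div_five_mem_cantorDigits_sub (q : ℝ) :
    (3 - 3 * q) / 5 ∈ cantorDigits q - cantorDigits q :=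
  ⟨(3 - 3 * q) / 5, by simp [cantorDigits], 0, by simp [cantorDigits], sub_zero _⟩

/-- The properties of `C(a) - C(a)` the proof rests on. -/
structure IsDifferenceAttractor (q : ℝ) (K : Set ℝ) : Prop where
  one_seventh_le : 1 / 7 ≤ q
  lt_one_sixth : q < 1 / 6
  isSelfSimilar : IsSelfSimilar K (cantorDigits q - cantorDigits q) q
  isClosed : IsClosed K
  subset_Icc : K ⊆ Icc (-1) 1
  one_mem : (1 : ℝ) ∈ K
  neg_mem : ∀ x ∈ K, -x ∈ K

namespace IsDifferenceAttractor

variable {q : ℝ} {K : Set ℝ}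

lemma q_pos (hK : IsDifferenceAttractor q K) : 0 < q := by
  linarith [hK.one_seventh_le]

lemma add_mul_mem (hK : IsDifferenceAttractor q K) {e y : ℝ}
    (he : e ∈ cantorDigits q - cantorDigits q) (hy : y ∈ K) : e + q * y ∈ K :=
  (hK.isSelfSimilar _).2 ⟨e, he, y, hy, rfl⟩

lemma Icc_subset (hK : IsDifferenceAttractor q K) : Icc (-3 / 5) (3 / 5) ⊆ K := by
  have hq := hK.q_pos
  have hq1 := hK.one_seventh_le
  refine Icc_subset_of_covered_by_images hK.isClosed ⟨1, hK.one_mem⟩ hq.le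
    (by linarith [hK.lt_one_sixth]) fun x hx => ?_
  -- `[-3/5, 3/5]` is covered by its images under the digits `k (1 - q) / 5`, `|k| ≤ 3`
  obtain ⟨k, hk, hxk⟩ := exists_abs_sub_le_of_mem_Icc (a := -3 * ((1 - q) / 5))
    (d := (1 - q) / 5) (w := 3 * q / 5) (x := x) (by linarith) 6
    ⟨by linarith [hx.1], by push_cast; linarith [hx.2]⟩
  refine ⟨-3 * ((1 - q) / 5) + k * ((1 - q) / 5), fun y hy => hK.add_mul_mem ?_ hy,
    (x - (-3 * ((1 - q) / 5) + k * ((1 - q) / 5))) / q, ?_, by field_simp; ring⟩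
  · simp only [cantorDigits, Set.mem_sub, mem_insert_iff, mem_singleton_iff]
    interval_cases k
    · exact ⟨0, by simp, _, Or.inr (Or.inl rfl), by ring⟩
    · exact ⟨0, by simp, _, Or.inr (Or.inr (Or.inl rfl)), by ring⟩
    · exact ⟨_, Or.inr (Or.inr (Or.inl rfl)), _, Or.inr (Or.inl rfl), by ring⟩
    · exact ⟨0, by simp, 0, by simp, by ring⟩
    · exact ⟨_, Or.inr (Or.inl rfl), _, Or.inr (Or.inr (Or.inl rfl)), by ring⟩
    · exact ⟨_, Or.inr (Or.inr (Or.inl rfl)), 0, by simp, by ring⟩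
    · exact ⟨_, Or.inr (Or.inl rfl), 0, by simp, by ring⟩
  · obtain ⟨h1, h2⟩ := abs_le.1 hxk
    constructor
    · rw [le_div_iff₀ hq]; linarith
    · rw [div_le_iff₀ hq]; linarith

lemma exists_preimage_of_three_fifths_le (hK : IsDifferenceAttractor q K) {z : ℝ}
    (hz : z ∈ K) (h : 3 / 5 ≤ z) : ∃ y ∈ K, (3 - 3 * q) / 5 + q * y = z ∨ 1 - q + q * y = z := by
  obtain ⟨e, he, y, hy, rfl⟩ := (hK.isSelfSimilar z).1 hz
  refine ⟨y, hy, ?_⟩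
  rcases cantorDigits_sub_eq_of_three_fifths_le hK.q_pos.le (by linarith [hK.lt_one_sixth]) he
    (hK.subset_Icc hy) h with rfl | rfl
  exacts [Or.inl rfl, Or.inr rfl]

lemma affineCopyOn_digit_five (hK : IsDifferenceAttractor q K) :
    AffineCopyOn K (1 - q) q (Ici (-1)) := by
  have hq := hK.q_pos
  have hq2 := hK.lt_one_sixth
  refine ⟨hq, fun x hx => ⟨fun h => ?_, hK.add_mul_mem (one_sub_mem_cantorDigits_sub q)⟩⟩
  have hx' : 1 - 2 * q ≤ 1 - q + q * x := by nlinarith [mem_Ici.1 hx]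
  obtain ⟨y, hy, hxy | hxy⟩ := hK.exists_preimage_of_three_fifths_le h (by linarith)
  · nlinarith [(hK.subset_Icc hy).2]
  · rwa [← mul_left_cancel₀ hq.ne' (add_left_cancel hxy)]

lemma affineCopyOn_digit_three (hK : IsDifferenceAttractor q K) :
    AffineCopyOn K ((3 - 3 * q) / 5) q (Icc (-3 / 5) 1) := by
  have hq := hK.q_pos
  have hq1 := hK.one_seventh_le
  have hq2 := hK.lt_one_sixth
  refine ⟨hq, fun x hx => ?_⟩
  rcases le_total x (3 / 5) with hx35 | hx35
  · exact iff_of_true (hK.Icc_subset ⟨by nlinarith [hx.1], by nlinarith⟩)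
      (hK.Icc_subset ⟨hx.1, hx35⟩)
  refine ⟨fun h => ?_, hK.add_mul_mem (three_sub_three_mul_div_five_mem_cantorDigits_sub q)⟩
  obtain ⟨y, hy, hxy | hxy⟩ := hK.exists_preimage_of_three_fifths_le h (by nlinarith)
  · rwa [← mul_left_cancel₀ hq.ne' (add_left_cancel hxy)]
  · nlinarith [(hK.subset_Icc hy).1, hx.2]

lemma isOpenGap_central (hK : IsDifferenceAttractor q K) :
    IsOpenGap K ((3 + 2 * q) / 5) (1 - 2 * q) := by
  have hq := hK.q_pos
  have hq2 := hK.lt_one_sixth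
  refine ⟨by linarith, ?_, ?_, Set.disjoint_left.2 fun z hz hzK => ?_⟩
  · convert hK.add_mul_mem (three_sub_three_mul_div_five_mem_cantorDigits_sub q) hK.one_mem
      using 1
    ring
  · convert hK.add_mul_mem (one_sub_mem_cantorDigits_sub q) (hK.neg_mem 1 hK.one_mem) using 1
    ring
  obtain ⟨y, hy, hzy | hzy⟩ :=
    hK.exists_preimage_of_three_fifths_le hzK (by linarith [hz.1])
  · nlinarith [(hK.subset_Icc hy).2, hz.1]
  · nlinarith [(hK.subset_Icc hy).1, hz.2]

lemma isOpenGap_location (hK : IsDifferenceAttractor q K) {u v : ℝ} (h : IsOpenGap K u v) :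
    3 / 5 ≤ u ∨ v ≤ -3 / 5 := by
  by_contra! huv
  have hlt : max u (-3 / 5) < min v (3 / 5) :=
    max_lt (lt_min h.1 huv.1) (lt_min huv.2 (by norm_num))
  have hm : (max u (-3 / 5) + min v (3 / 5)) / 2 ∈ Ioo u v ∩ Icc (-3 / 5) (3 / 5) := by
    refine ⟨⟨?_, ?_⟩, ?_, ?_⟩ <;>
      linarith [le_max_left u (-3 / 5), le_max_right u (-3 / 5), min_le_left v (3 / 5),
        min_le_right v (3 / 5)]
  exact Set.disjoint_left.1 h.2.2.2 hm.1 (hK.Icc_subset hm.2)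

lemma islandIn_one_sub_pow (hK : IsDifferenceAttractor q K) (n : ℕ) :
    IslandIn K (1 - 2 * q ^ n) 1 := by
  have hq := hK.q_pos
  have hq2 := hK.lt_one_sixth
  induction n with
  | zero =>
    have hG := hK.isOpenGap_central
    refine ⟨_, _, -3 / 5, 3 / 5, _, _, by linarith, hG.neg hK.neg_mem, by linarith, by norm_num,
      hK.Icc_subset, by linarith, hG, by linarith⟩
  | succ n ih =>
    have hpow : q ^ n ≤ 1 := pow_le_one₀ hq.le (by linarith)
    convert hK.affineCopyOn_digit_five.islandIn (fun x hx => mem_Ici.2 (by linarith [hx.1])) ih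
      using 1 <;> ring

lemma islandsAccumulateBelow_one (hK : IsDifferenceAttractor q K) :
    IslandsAccumulateBelow K 1 := by
  intro ε hε
  obtain ⟨n, hn⟩ :=
    exists_pow_lt_of_lt_one (half_pos hε) (show q < 1 by linarith [hK.lt_one_sixth])
  exact (hK.islandIn_one_sub_pow n).mono (by linarith) le_rfl

lemma islandsAccumulateBelow_central (hK : IsDifferenceAttractor q K) :
    IslandsAccumulateBelow K ((3 + 2 * q) / 5) := by
  convert hK.affineCopyOn_digit_three.islandsAccumulateBelow (Icc_mem_nhdsLT (by norm_num))
    hK.islandsAccumulateBelow_one using 1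
  ring

lemma islandsAccumulateAbove_central (hK : IsDifferenceAttractor q K) :
    IslandsAccumulateAbove K (1 - 2 * q) := by
  convert hK.affineCopyOn_digit_five.islandsAccumulateAbove
    (mem_of_superset self_mem_nhdsWithin (Ioi_subset_Ici le_rfl))
    (hK.islandsAccumulateBelow_one.neg hK.neg_mem) using 1
  ring

/-- A gap in `[3/5, 1]` is either the central gap or the image of a gap `1 / q` times longer under
`x ↦ (3 - 3q)/5 + q x` or `x ↦ 1 - q + q x`. -/
lemma islandsAccumulate_step (hK : IsDifferenceAttractor q K) {n : ℕ}
    (ih : ∀ u v, IsOpenGap K u v → 2 * q ^ n < v - u →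
      IslandsAccumulateBelow K u ∧ IslandsAccumulateAbove K v)
    {u v : ℝ} (h : IsOpenGap K u v) (hlen : 2 * q ^ (n + 1) < v - u) (hu : 3 / 5 ≤ u) :
    IslandsAccumulateBelow K u ∧ IslandsAccumulateAbove K v := by
  have hq := hK.q_pos
  have hq2 := hK.lt_one_sixth
  have hpre : ∀ c z : ℝ, ∃ z', z = c + q * z' := fun c z => ⟨(z - c) / q, by field_simp; ring⟩
  have hshrink : ∀ c u' v' : ℝ, 2 * q ^ (n + 1) < c + q * v' - (c + q * u') →
      2 * q ^ n < v' - u' := fun c u' v' hlt => by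
    rw [pow_succ] at hlt
    exact lt_of_mul_lt_mul_left (by linarith) hq.le
  have hG := hK.isOpenGap_central
  rcases le_or_gt v ((3 + 2 * q) / 5) with hv | hv
  · obtain ⟨u', rfl⟩ := hpre ((3 - 3 * q) / 5) u
    obtain ⟨v', rfl⟩ := hpre ((3 - 3 * q) / 5) v
    have hu' : 3 / 5 ≤ u' := by nlinarith
    have h' := (hK.affineCopyOn_digit_three.isOpenGap_iff
      (Icc_subset_Icc (by linarith) (by nlinarith))).1 h
    obtain ⟨hbelow, habove⟩ := ih u' v' h' (hshrink _ u' v' hlen)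
    obtain ⟨z, hz, hvz⟩ := habove.exists_mem_gt
    have hv' : v' < 1 := hvz.trans_le (hK.subset_Icc hz).2
    exact ⟨hK.affineCopyOn_digit_three.islandsAccumulateBelow
        (Icc_mem_nhdsLT_of_mem ⟨by linarith, by linarith [h'.1]⟩) hbelow,
      hK.affineCopyOn_digit_three.islandsAccumulateAbove
        (Icc_mem_nhdsGT_of_mem ⟨by linarith [h'.1], hv'⟩) habove⟩
  rcases le_or_gt (1 - 2 * q) u with hu2 | hu2
  · obtain ⟨u', rfl⟩ := hpre (1 - q) u
    obtain ⟨v', rfl⟩ := hpre (1 - q) v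
    have hu' : -1 ≤ u' := by nlinarith
    have h' := (hK.affineCopyOn_digit_five.isOpenGap_iff fun x hx =>
      mem_Ici.2 (hu'.trans hx.1)).1 h
    obtain ⟨hbelow, habove⟩ := ih u' v' h' (hshrink _ u' v' hlen)
    obtain ⟨z, hz, hzu⟩ := hbelow.exists_mem_lt
    have hu'' : -1 < u' := (hK.subset_Icc hz).1.trans_lt hzu
    exact ⟨hK.affineCopyOn_digit_five.islandsAccumulateBelow
        (mem_nhdsWithin_of_mem_nhds (Ici_mem_nhds hu'')) hbelow,
      hK.affineCopyOn_digit_five.islandsAccumulateAbove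
        (mem_of_superset self_mem_nhdsWithin (Ioi_subset_Ici (by linarith [h'.1]))) habove⟩
  -- otherwise `(u, v)` meets the central gap, so it is the central gap
  have hgu : (3 + 2 * q) / 5 ≤ u :=
    not_lt.1 fun hlt => Set.disjoint_left.1 h.2.2.2 ⟨hlt, hv⟩ hG.2.1
  have hvg : v ≤ 1 - 2 * q :=
    not_lt.1 fun hlt => Set.disjoint_left.1 h.2.2.2 ⟨hu2, hlt⟩ hG.2.2.1
  obtain rfl : u = (3 + 2 * q) / 5 := (hgu.eq_or_lt.resolve_right fun hlt =>
    Set.disjoint_left.1 hG.2.2.2 ⟨hlt, hu2⟩ h.2.1).symm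
  obtain rfl : v = 1 - 2 * q := hvg.eq_or_lt.resolve_right fun hlt =>
    Set.disjoint_left.1 hG.2.2.2 ⟨hv, hlt⟩ h.2.2.1
  exact ⟨hK.islandsAccumulateBelow_central, hK.islandsAccumulateAbove_central⟩

lemma islandsAccumulate (hK : IsDifferenceAttractor q K) {u v : ℝ} (h : IsOpenGap K u v) :
    IslandsAccumulateBelow K u ∧ IslandsAccumulateAbove K v := by
  suffices key : ∀ n : ℕ, ∀ u v, IsOpenGap K u v → 2 * q ^ n < v - u →
      IslandsAccumulateBelow K u ∧ IslandsAccumulateAbove K v by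
    obtain ⟨n, hn⟩ := exists_pow_lt_of_lt_one (half_pos (sub_pos.2 h.1))
      (show q < 1 by linarith [hK.lt_one_sixth])
    exact key n u v h (by linarith)
  intro n
  induction n with
  | zero =>
    intro u v h hlen
    linarith [(hK.subset_Icc h.2.1).1, (hK.subset_Icc h.2.2.1).2, pow_zero q]
  | succ n ih =>
    intro u v h hlen
    rcases hK.isOpenGap_location h with hu | hv
    · exact hK.islandsAccumulate_step ih h hlen hu
    · have hneg := hK.islandsAccumulate_step ih (h.neg hK.neg_mem) (by linarith) (by linarith)
      simpa using And.intro (hneg.2.neg hK.neg_mem) (hneg.1.neg hK.neg_mem)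

lemma isOpenGap_pow (hK : IsDifferenceAttractor q K) (k : ℕ) :
    IsOpenGap K (1 - q ^ k * ((2 - 2 * q) / 5)) (1 - 2 * q ^ (k + 1)) := by
  have hq := hK.q_pos
  have hq2 := hK.lt_one_sixth
  induction k with
  | zero => convert hK.isOpenGap_central using 1 <;> ring
  | succ k ih =>
    have hpow : q ^ k ≤ 1 := pow_le_one₀ hq.le (by linarith)
    have hpow' : 0 ≤ q ^ k := pow_nonneg hq.le k
    convert (hK.affineCopyOn_digit_five.isOpenGap_iff fun x hx => mem_Ici.2 ?_).2 ih using 1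
    · ring
    · ring
    · nlinarith [hx.1]

lemma infinite_setOf_isGapOf (hK : IsDifferenceAttractor q K) :
    {G | IsGapOf K G}.Infinite := by
  have hq := hK.q_pos
  refine infinite_of_injective_forall_mem (fun k j hkj => ?_) fun k =>
    (hK.isOpenGap_pow k).isGapOf
  have := congrArg sSup hkj
  simp only [csSup_Ioo (hK.isOpenGap_pow _).1] at this
  have hpow : q ^ (k + 1) = q ^ (j + 1) := by linarith
  exact Nat.succ_injective
    ((pow_right_strictAnti₀ hq (by linarith [hK.lt_one_sixth])).injective hpow)

lemma perfect (hK : IsDifferenceAttractor q K) : Perfect K :=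
  hK.isSelfSimilar.perfect hK.isClosed ((Metric.isBounded_Icc (-1 : ℝ) 1).subset hK.subset_Icc)
    ⟨1, hK.one_mem, -1, hK.neg_mem 1 hK.one_mem, by norm_num⟩ hK.q_pos
    (by linarith [hK.lt_one_sixth])

lemma isCantorval (hK : IsDifferenceAttractor q K) : IsCantorval K :=
  isCantorval_of_islandsAccumulate hK.perfect hK.infinite_setOf_isGapOf
    fun _ _ h => hK.islandsAccumulate h

end IsDifferenceAttractor

lemma isDifferenceAttractor_cantorSet_sub {q : ℝ} {a : ℕ → ℝ} (hq1 : 1 / 7 ≤ q)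
    (hq2 : q < 1 / 6) (ha : ∀ n, a (n + 1) ∈ Ioo 0 1) (hper : ∀ n, a (n + 2) = a n)
    (hd1 : dSeq a 1 = (2 + 3 * q) / 5) (hd2 : dSeq a 2 = q) :
    IsDifferenceAttractor q (cantorSet a - cantorSet a) := by
  have hlt : ∀ n, a (n + 1) < 1 := fun n => (ha n).2
  have hC : IsCompact (cantorSet a) :=
    (isCompact_cantorStep hlt 0).of_isClosed_subset
      (isClosed_iInter fun n => (isCompact_cantorStep hlt n).isClosed) (iInter_subset _ 0)
  have hC01 : cantorSet a ⊆ Icc 0 1 := (iInter_subset _ 0).trans (cantorStep_zero a).le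
  have hdigits : ({0, 1 - dSeq a 1, dSeq a 1 - dSeq a 2, 1 - dSeq a 2} : Set ℝ) =
      cantorDigits q := by
    rw [hd1, hd2, cantorDigits]
    congr 2 <;> ring_nf
  refine ⟨hq1, hq2, ?_, ?_, ?_, ?_, ?_⟩
  · have := (cantorSet_isSelfSimilar ha hper).sub_self
    rwa [hdigits, hd2] at this
  · rw [sub_eq_add_neg]
    exact (hC.add hC.neg).isClosed
  · rintro _ ⟨x, hx, y, hy, rfl⟩
    obtain ⟨⟨hx0, hx1⟩, ⟨hy0, hy1⟩⟩ := And.intro (hC01 hx) (hC01 hy)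
    constructor <;> linarith
  · exact ⟨1, mem_iInter.2 (one_mem_cantorStep hlt), 0, mem_iInter.2 (zero_mem_cantorStep hlt),
      sub_zero 1⟩
  · rintro _ ⟨x, hx, y, hy, rfl⟩
    exact ⟨y, hy, x, hx, (neg_sub x y).symm⟩

/-- For every `q ∈ [1/7, 1/6)`, the `2`-periodic sequence with `a_{2n-1} = (1-6q)/5` and
`a_{2n} = (2-7q)/(2+3q)` satisfies `a₁ < 1/3 < a₂` and `C(a) - C(a)` is a Cantorval. -/
theorem cantorval_multigeometric (q : ℝ) (hq1 : 1 / 7 ≤ q) (hq2 : q < 1 / 6)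
    (a : ℕ → ℝ)
    (haq : a = fun n => if n % 2 = 1 then (1 - 6 * q) / 5 else (2 - 7 * q) / (2 + 3 * q)) :
    (1 - 6 * q) / 5 < 1 / 3 ∧ 1 / 3 < (2 - 7 * q) / (2 + 3 * q) ∧
      IsCantorval (cantorSet a - cantorSet a) := by
  have h23 : 0 < 2 + 3 * q := by linarith
  have hodd : a 1 = (1 - 6 * q) / 5 := by simp [haq]
  have heven : a 2 = (2 - 7 * q) / (2 + 3 * q) := by simp [haq]
  have hper : ∀ n, a (n + 2) = a n := by simp [haq]
  have ha : ∀ n, a (n + 1) ∈ Ioo 0 1 := by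
    intro n
    induction n using Nat.twoStepInduction with
    | zero => rw [hodd]; constructor <;> linarith
    | one => rw [heven, mem_Ioo, lt_div_iff₀ h23, div_lt_one h23]; constructor <;> linarith
    | more n ih => rwa [hper]
  have hd1 : dSeq a 1 = (2 + 3 * q) / 5 := by rw [dSeq_one, hodd]; ring
  have hd2 : dSeq a 2 = q := by
    rw [dSeq_succ, hd1, heven]
    field_simp
    ring
  refine ⟨by linarith, by rw [lt_div_iff₀ h23]; linarith, ?_⟩
  exact (isDifferenceAttractor_cantorSet_sub hq1 hq2 ha hper hd1 hd2).isCantorval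

end CCS
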